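/- For any topological space Y, the pair (ℕ × 2^ω, Y) satisfies UU if and only if the pair (2^ω, Y) satisfies UU, where ℕ carries the discrete topology and ℕ × 2^ω the product topology. -/

import Mathlib

/-!
An open `U ⊆ X × Y` that is uniquely universal pulls back along any bijection `f : X' → X` to a
uniquely universal set, as long as the pullback is open. This is automatic for continuous `f`. If
`f` is only continuous off a point `x₀`, it still holds when `f x₀` indexes the empty set, and for
a homogeneous `X` the index of the empty set can be moved to `f x₀` by a homeomorphism.

So it suffices to have a bijection `ℕ × 2^ω → 2^ω` that is continuous and whose inverse is
continuous off `0^ω`. Send `(n + 1, x)` to `0ⁿ11x` and `(0, x)` to `x` with a `0` inserted right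
after its first `1` (so `0^ω` is fixed). The images `{0^ω}`, `0ⁿ10·2^ω` and `0ⁿ11·2^ω` partition
`2^ω`, and away from `0^ω` the inverse only looks at a fixed finite prefix to choose its branch.
-/

/-- The pair (X, Y) satisfies UU: there is an open set `U ⊆ X × Y` such that
every open `W ⊆ Y` is the cross section `{y | (x, y) ∈ U}` for exactly one `x`. -/
def UU (X Y : Type*) [TopologicalSpace X] [TopologicalSpace Y] : Prop :=
  ∃ U : Set (X × Y), IsOpen U ∧
    ∀ W : Set Y, IsOpen W → ∃! x : X, {y | (x, y) ∈ U} = W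

open Function PiNat

section UniquelyUniversal

variable {X X' Y : Type*} [TopologicalSpace X] [TopologicalSpace X'] [TopologicalSpace Y]

def IsUniquelyUniversal (U : Set (X × Y)) : Prop :=
  IsOpen U ∧ ∀ W : Set Y, IsOpen W → ∃! x : X, {y | (x, y) ∈ U} = W

theorem IsUniquelyUniversal.preimage {U : Set (X × Y)} (hU : IsUniquelyUniversal U)
    {f : X' → X} (hf : Bijective f) (hopen : IsOpen (Prod.map f id ⁻¹' U)) :
    IsUniquelyUniversal (Prod.map f id ⁻¹' U) :=
  ⟨hopen, fun W hW => hf.existsUnique_iff.1 (hU.2 W hW)⟩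

theorem IsUniquelyUniversal.preimage_of_continuous {U : Set (X × Y)}
    (hU : IsUniquelyUniversal U) {f : X' → X} (hf : Continuous f) (hb : Bijective f) :
    IsUniquelyUniversal (Prod.map f id ⁻¹' U) :=
  hU.preimage hb (hU.1.preimage (hf.prodMap continuous_id))

theorem isOpen_prodMap_preimage_of_continuousOn {U : Set (X × Y)} (hU : IsOpen U)
    {f : X' → X} {s : Set X'} (hs : IsOpen s) (hf : ContinuousOn f s)
    (hout : ∀ x ∉ s, ∀ y, (f x, y) ∉ U) : IsOpen (Prod.map f id ⁻¹' U) := by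
  have hrestrict : Prod.map f id ⁻¹' U = s ×ˢ Set.univ ∩ Prod.map f id ⁻¹' U := by
    ext ⟨x, y⟩
    by_cases hx : x ∈ s
    · simp [hx]
    · simpa [hx] using hout x hx y
  rw [hrestrict]
  exact (hf.prodMap continuousOn_id).isOpen_inter_preimage (hs.prod isOpen_univ) hU

theorem UU.of_continuous_bijective (h : UU X Y) {f : X' → X} (hf : Continuous f)
    (hb : Bijective f) : UU X' Y :=
  let ⟨_, hU⟩ := h
  ⟨_, IsUniquelyUniversal.preimage_of_continuous hU hf hb⟩

theorem UU.exists_section_eq_empty (h : UU X Y) (hX : ∀ x x' : X, ∃ e : X ≃ₜ X, e x = x')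
    (x : X) : ∃ U : Set (X × Y), IsUniquelyUniversal U ∧ ∀ y, (x, y) ∉ U := by
  obtain ⟨U, hU⟩ := h
  obtain ⟨w, hw, -⟩ := hU.2 ∅ isOpen_empty
  obtain ⟨e, rfl⟩ := hX x w
  refine ⟨_, IsUniquelyUniversal.preimage_of_continuous hU e.continuous e.bijective,
    fun y hy => ?_⟩
  have hy' : y ∈ {y | (e x, y) ∈ U} := hy
  rwa [hw] at hy'

theorem UU.of_bijective_of_continuousOn_compl_singleton [T1Space X'] (h : UU X Y)
    (hX : ∀ x x' : X, ∃ e : X ≃ₜ X, e x = x') {f : X' → X} (hb : Bijective f) {x₀ : X'}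
    (hf : ContinuousOn f {x₀}ᶜ) : UU X' Y := by
  obtain ⟨U, hU, hempty⟩ := h.exists_section_eq_empty hX (f x₀)
  refine ⟨_, hU.preimage hb (isOpen_prodMap_preimage_of_continuousOn hU.1 isOpen_compl_singleton
    hf fun x hx => ?_)⟩
  rw [Set.notMem_compl_iff, Set.mem_singleton_iff] at hx
  exact hx ▸ hempty

end UniquelyUniversal

theorem exists_homeomorph_prod_pi_apply_eq {X ι α : Type*} [TopologicalSpace X]
    [DiscreteTopology X] [TopologicalSpace α] [DiscreteTopology α] (p q : X × (ι → α)) :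
    ∃ e : X × (ι → α) ≃ₜ X × (ι → α), e p = q := by
  classical
  refine ⟨(Equiv.swap p.1 q.1).toHomeomorphOfDiscrete.prodCongr
    (Homeomorph.piCongrRight fun i => (Equiv.swap (p.2 i) (q.2 i)).toHomeomorphOfDiscrete), ?_⟩
  ext <;> exact Equiv.swap_apply_left _ _

theorem PiNat.cylinder_mem_nhds {E : ℕ → Type*} [∀ n, TopologicalSpace (E n)]
    [∀ n, DiscreteTopology (E n)] (x : ∀ n, E n) (n : ℕ) : cylinder x n ∈ nhds x :=
  (isOpen_cylinder _ x n).mem_nhds (self_mem_cylinder x n)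

namespace CantorSpace

section InsertRemove

variable {α : Type*}

def insertAt (k : ℕ) (a : α) (x : ℕ → α) : ℕ → α := fun i =>
  if i < k then x i else if i = k then a else x (i - 1)

def removeAt (k : ℕ) (x : ℕ → α) : ℕ → α := fun i => if i < k then x i else x (i + 1)

theorem removeAt_insertAt (k : ℕ) (a : α) (x : ℕ → α) :
    removeAt k (insertAt k a x) = x := by
  funext i
  simp only [removeAt, insertAt]
  split_ifs <;> first | rfl | omega

theorem insertAt_removeAt (k : ℕ) (x : ℕ → α) : insertAt k (x k) (removeAt k x) = x := by
  funext i
  simp only [removeAt, insertAt]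
  split_ifs <;> first | rfl | (subst_vars; rfl) | (congr 1; omega)

theorem insertAt_apply_self (k : ℕ) (a : α) (x : ℕ → α) : insertAt k a x k = a := by
  simp [insertAt]

theorem insertAt_mem_cylinder (k : ℕ) (a : α) (x : ℕ → α) :
    insertAt k a x ∈ cylinder x k :=
  fun _ hi => if_pos hi

theorem removeAt_mem_cylinder (k : ℕ) (x : ℕ → α) : removeAt k x ∈ cylinder x k :=
  fun _ hi => if_pos hi

theorem insertAt_const (k : ℕ) (a : α) : insertAt k a (fun _ => a) = fun _ => a := by
  funext i
  simp only [insertAt]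
  split_ifs <;> rfl

theorem removeAt_const (k : ℕ) (a : α) : removeAt k (fun _ => a) = fun _ => a := by
  funext i
  simp only [removeAt]
  split_ifs <;> rfl

variable [TopologicalSpace α]

theorem continuous_insertAt (k : ℕ) (a : α) : Continuous (insertAt k a) :=
  continuous_pi fun i => by simp only [insertAt]; split_ifs <;> fun_prop

theorem continuous_removeAt (k : ℕ) : Continuous (removeAt k : (ℕ → α) → ℕ → α) :=
  continuous_pi fun i => by simp only [removeAt]; split_ifs <;> fun_prop

end InsertRemove

local notation "𝟘" => fun _ : ℕ => false

/-- The position of the first `true` in `c`; it is `0` for `c = 𝟘`. -/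
noncomputable def firstTrue (c : ℕ → Bool) : ℕ := firstDiff c 𝟘

theorem apply_of_lt_firstTrue {c : ℕ → Bool} {i : ℕ} (hi : i < firstTrue c) : c i = false :=
  apply_eq_of_lt_firstDiff hi

theorem apply_firstTrue {c : ℕ → Bool} (hc : c ≠ 𝟘) : c (firstTrue c) = true := by
  simpa [firstTrue] using apply_firstDiff_ne hc

theorem firstTrue_eq {c : ℕ → Bool} {m : ℕ} (hlt : ∀ i < m, c i = false) (hm : c m = true) :
    firstTrue c = m := by
  have hc : c ≠ 𝟘 := fun h => by simp [h] at hm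
  rcases lt_trichotomy (firstTrue c) m with h | h | h
  · simpa [hlt _ h] using apply_firstTrue hc
  · exact h
  · simp [apply_of_lt_firstTrue h] at hm

theorem firstTrue_eq_of_mem_cylinder {c d : ℕ → Bool} (hc : c ≠ 𝟘)
    (hd : d ∈ cylinder c (firstTrue c + 1)) : firstTrue d = firstTrue c :=
  firstTrue_eq (fun i hi => (hd i (by omega)).trans (apply_of_lt_firstTrue hi))
    ((hd _ (by omega)).trans (apply_firstTrue hc))

/-- The sequence `0ᵐ1x`. -/
def zerosTrue (m : ℕ) (x : ℕ → Bool) : ℕ → Bool := fun i =>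
  if i < m then false else if i = m then true else x (i - (m + 1))

theorem zerosTrue_apply_add (m i : ℕ) (x : ℕ → Bool) : zerosTrue m x (m + 1 + i) = x i := by
  simp only [zerosTrue, if_neg (show ¬m + 1 + i < m by omega),
    if_neg (show m + 1 + i ≠ m by omega), Nat.add_sub_cancel_left]

theorem eq_zerosTrue {c x : ℕ → Bool} {m : ℕ} (hlt : ∀ i < m, c i = false) (hm : c m = true)
    (htail : ∀ i, c (m + 1 + i) = x i) : c = zerosTrue m x := by
  funext i
  simp only [zerosTrue]
  split_ifs with h₁ h₂
  · exact hlt i h₁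
  · exact h₂ ▸ hm
  · rw [← htail]
    congr 1
    omega

theorem continuous_zerosTrue (m : ℕ) : Continuous (zerosTrue m) :=
  continuous_pi fun i => by simp only [zerosTrue]; split_ifs <;> fun_prop

theorem firstTrue_zerosTrue (m : ℕ) (x : ℕ → Bool) : firstTrue (zerosTrue m x) = m :=
  firstTrue_eq (fun i hi => if_pos hi) (by simp [zerosTrue])

noncomputable def insertFalseAfterFirstTrue (x : ℕ → Bool) : ℕ → Bool :=
  insertAt (firstTrue x + 1) false x

theorem insertFalseAfterFirstTrue_apply_eq_false {x : ℕ → Bool} {i : ℕ}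
    (hx : x ∈ cylinder 𝟘 (i + 1)) : insertFalseAfterFirstTrue x i = false := by
  simp only [insertFalseAfterFirstTrue, insertAt]
  split_ifs <;> first | rfl | exact hx _ (by omega)

theorem continuous_insertFalseAfterFirstTrue : Continuous insertFalseAfterFirstTrue := by
  refine continuous_iff_continuousAt.2 fun x => ?_
  by_cases hx : x = 𝟘
  · subst hx
    refine continuousAt_pi.2 fun i => (continuousAt_const (y := false)).congr ?_
    filter_upwards [cylinder_mem_nhds 𝟘 (i + 1)] with d hd
    exact (insertFalseAfterFirstTrue_apply_eq_false hd).symm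
  · refine (continuous_insertAt (firstTrue x + 1) false).continuousAt.congr ?_
    filter_upwards [cylinder_mem_nhds x _] with d hd
    rw [insertFalseAfterFirstTrue, firstTrue_eq_of_mem_cylinder hx hd]

noncomputable def ofNatProd : ℕ × (ℕ → Bool) → ℕ → Bool
  | (0, x) => insertFalseAfterFirstTrue x
  | (n + 1, x) => zerosTrue n (zerosTrue 0 x)

noncomputable def toNatProd (c : ℕ → Bool) : ℕ × (ℕ → Bool) :=
  if c (firstTrue c + 1) then (firstTrue c + 1, fun i => c (firstTrue c + 2 + i))
  else (0, removeAt (firstTrue c + 1) c)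

theorem toNatProd_ofNatProd : LeftInverse toNatProd ofNatProd := by
  rintro ⟨_ | n, x⟩
  · show toNatProd (insertFalseAfterFirstTrue x) = (0, x)
    by_cases hx : x = 𝟘
    · subst hx
      simp [insertFalseAfterFirstTrue, insertAt_const, toNatProd, removeAt_const]
    have hfirst : firstTrue (insertFalseAfterFirstTrue x) = firstTrue x :=
      firstTrue_eq_of_mem_cylinder hx (insertAt_mem_cylinder _ _ _)
    rw [toNatProd, hfirst, insertFalseAfterFirstTrue, insertAt_apply_self, removeAt_insertAt]
    rfl
  · show toNatProd (zerosTrue n (zerosTrue 0 x)) = (n + 1, x)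
    have hnext : zerosTrue n (zerosTrue 0 x) (n + 1) = true :=
      (zerosTrue_apply_add n 0 _).trans rfl
    have htail (i : ℕ) : zerosTrue n (zerosTrue 0 x) (n + 2 + i) = x i := by
      rw [show n + 2 + i = n + 1 + (0 + 1 + i) by omega, zerosTrue_apply_add, zerosTrue_apply_add]
    simp only [toNatProd, firstTrue_zerosTrue, hnext, htail, if_true]

theorem ofNatProd_toNatProd : LeftInverse ofNatProd toNatProd := by
  intro c
  by_cases hc : c = 𝟘
  · subst hc
    simp [toNatProd, removeAt_const, ofNatProd, insertFalseAfterFirstTrue, insertAt_const]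
  unfold toNatProd
  cases hnext : c (firstTrue c + 1)
  · have hfirst : firstTrue (removeAt (firstTrue c + 1) c) = firstTrue c :=
      firstTrue_eq_of_mem_cylinder hc (removeAt_mem_cylinder _ _)
    simp only [Bool.false_eq_true, if_false, ofNatProd, insertFalseAfterFirstTrue, hfirst]
    rw [← hnext, insertAt_removeAt]
  · have hrest :
        (fun i => c (firstTrue c + 1 + i)) = zerosTrue 0 fun i => c (firstTrue c + 2 + i) :=
      eq_zerosTrue (fun _ h => absurd h (Nat.not_lt_zero _)) hnext fun i => by
        rw [show firstTrue c + 1 + (0 + 1 + i) = firstTrue c + 2 + i by omega]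
    rw [if_pos rfl]
    exact (eq_zerosTrue (fun _ => apply_of_lt_firstTrue) (apply_firstTrue hc)
      (congrFun hrest)).symm

noncomputable def natProdEquiv : ℕ × (ℕ → Bool) ≃ (ℕ → Bool) :=
  ⟨ofNatProd, toNatProd, toNatProd_ofNatProd, ofNatProd_toNatProd⟩

theorem continuous_natProdEquiv : Continuous natProdEquiv :=
  continuous_prod_of_discrete_left.2 fun
    | 0 => continuous_insertFalseAfterFirstTrue
    | n + 1 => (continuous_zerosTrue n).comp (continuous_zerosTrue 0)

theorem continuousOn_natProdEquiv_symm : ContinuousOn natProdEquiv.symm {𝟘}ᶜ := by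
  refine continuousOn_of_forall_continuousAt fun c hc => ?_
  rw [Set.mem_compl_singleton_iff] at hc
  have hnear : ∀ᶠ d in nhds c, d ∈ cylinder c (firstTrue c + 2) := cylinder_mem_nhds c _
  have hfirst : ∀ d ∈ cylinder c (firstTrue c + 2), firstTrue d = firstTrue c := fun d hd =>
    firstTrue_eq_of_mem_cylinder hc (cylinder_anti c (by omega) hd)
  have hnext : ∀ d ∈ cylinder c (firstTrue c + 2), d (firstTrue c + 1) = c (firstTrue c + 1) :=
    fun d hd => hd _ (by omega)
  show ContinuousAt toNatProd c
  cases hb : c (firstTrue c + 1)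
  · refine ((continuous_const (y := 0)).prodMk
      (continuous_removeAt (firstTrue c + 1))).continuousAt.congr ?_
    filter_upwards [hnear] with d hd
    simp [toNatProd, hfirst d hd, hnext d hd, hb]
  · refine ((continuous_const (y := firstTrue c + 1)).prodMk (continuous_pi fun i =>
      continuous_apply (firstTrue c + 2 + i))).continuousAt.congr ?_
    filter_upwards [hnear] with d hd
    simp [toNatProd, hfirst d hd, hnext d hd, hb]

end CantorSpace

theorem stmt_15 (Y : Type*) [TopologicalSpace Y] :
    UU (ℕ × (ℕ → Bool)) Y ↔ UU (ℕ → Bool) Y :=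
  ⟨fun h => h.of_bijective_of_continuousOn_compl_singleton exists_homeomorph_prod_pi_apply_eq
      CantorSpace.natProdEquiv.symm.bijective CantorSpace.continuousOn_natProdEquiv_symm,
    fun h => h.of_continuous_bijective CantorSpace.continuous_natProdEquiv
      CantorSpace.natProdEquiv.bijective⟩
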